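/- arXiv:2205.15022 — 2 statements merged into one kernel-verified Lean document; each statement's English description precedes it below -/
import Mathlib

section
/- For 0 < p ≤ 1 and s,t > 0 and x,y ∈ ℝ, one has (2^p·s + t)/(2^p·s + t + |x+y|^p) ≥ min( s/(s+|x|^p), t/(t+|y|^p) ). -/
/-!
Since `0 < p ≤ 1`, the map `u ↦ u ^ p` is subadditive on `[0, ∞)`, so
`|x + y| ^ p ≤ |x| ^ p + |y| ^ p`. The minimum of two fractions is at most their mediant,
`(s + t) / (s + t + |x| ^ p + |y| ^ p)`, and `u / (u + c)` increases in `u` and decreases in `c`,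
so raising `s` to `2 ^ p * s ≥ s` and lowering `|x| ^ p + |y| ^ p` to `|x + y| ^ p` only helps.
-/

theorem Real.abs_add_rpow_le {p : ℝ} (hp : 0 ≤ p) (hp1 : p ≤ 1) (x y : ℝ) :
    |x + y| ^ p ≤ |x| ^ p + |y| ^ p :=
  calc |x + y| ^ p ≤ (|x| + |y|) ^ p := by gcongr; exact abs_add_le x y
    _ ≤ |x| ^ p + |y| ^ p := Real.rpow_add_le_add_rpow (abs_nonneg x) (abs_nonneg y) hp hp1

theorem min_div_le_add_div {a b c d : ℝ} (hb : 0 < b) (hd : 0 < d) :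
    min (a / b) (c / d) ≤ (a + c) / (b + d) := by
  set m := min (a / b) (c / d)
  have hmb : m * b ≤ a := (le_div_iff₀ hb).1 (min_le_left _ _)
  have hmd : m * d ≤ c := (le_div_iff₀ hd).1 (min_le_right _ _)
  rw [le_div_iff₀ (add_pos hb hd), mul_add]
  exact add_le_add hmb hmd

theorem div_add_le_div_add {u u' c c' : ℝ} (hu : 0 < u) (huu' : u ≤ u') (hc' : 0 ≤ c')
    (hcc' : c' ≤ c) : u / (u + c) ≤ u' / (u' + c') := by
  rw [div_le_div_iff₀ (by linarith) (by linarith)]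
  nlinarith

theorem frac_triangle (p s t x y : ℝ) (hp : 0 < p) (hp1 : p ≤ 1)
    (hs : 0 < s) (ht : 0 < t) :
    min (s / (s + |x| ^ p)) (t / (t + |y| ^ p)) ≤
      (2 ^ p * s + t) / (2 ^ p * s + t + |x + y| ^ p) := by
  have h2p : s ≤ 2 ^ p * s := le_mul_of_one_le_left hs.le (Real.one_le_rpow one_le_two hp.le)
  calc min (s / (s + |x| ^ p)) (t / (t + |y| ^ p))
      ≤ (s + t) / (s + |x| ^ p + (t + |y| ^ p)) := min_div_le_add_div (by positivity) (by positivity)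
    _ = (s + t) / (s + t + (|x| ^ p + |y| ^ p)) := by ring
    _ ≤ (2 ^ p * s + t) / (2 ^ p * s + t + |x + y| ^ p) :=
        div_add_le_div_add (by positivity) (by linarith) (by positivity)
          (Real.abs_add_rpow_le hp.le hp1 x y)
end

section
/- In a finite dimensional fuzzy strong φ-b-normed linear space (X, N, φ, K, *) with * continuous at (1,1), a subset A ⊆ X is compact if and only if A is closed and fuzzy bounded. -/
open Filter Topology

/-- A fuzzy strong φ-b-norm on a real linear space `X`. -/
structure FuzzyStrongPhiBNorm (X : Type*) [AddCommGroup X] [Module ℝ X] where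
  N : X → ℝ → ℝ
  phi : ℝ → ℝ
  K : ℝ
  op : ℝ → ℝ → ℝ
  K_ge_one : 1 ≤ K
  N_nonneg : ∀ x t, 0 ≤ N x t
  N_le_one : ∀ x t, N x t ≤ 1
  phi_even : ∀ t, phi (-t) = phi t
  phi_one : phi 1 = 1
  phi_strictMono : StrictMonoOn phi (Set.Ioi (0:ℝ))
  phi_cont : ContinuousOn phi (Set.Ioi (0:ℝ))
  phi_lim_zero : Tendsto phi (nhdsWithin 0 (Set.Ioi 0)) (nhds 0)
  phi_lim_top : Tendsto phi atTop atTop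
  bN1 : ∀ x t, t ≤ 0 → N x t = 0
  bN2 : ∀ x, (∀ t > 0, N x t = 1) ↔ x = 0
  bN3 : ∀ (c : ℝ) (x : X) (t : ℝ), 0 < t → phi c ≠ 0 → N (c • x) t = N x (t / phi c)
  bN4 : ∀ (x y : X) (s t : ℝ), op (N x s) (N y t) ≤ N (x + y) (s + K * t)
  bN5_mono : ∀ x : X, Monotone (N x)
  bN5_lim : ∀ x : X, Tendsto (N x) atTop (nhds 1)

/-- The t-norm is continuous at (1,1): sequences tending to 1 combine to 1. -/
def ContAtOneOne (op : ℝ → ℝ → ℝ) : Prop :=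
  ∀ a b : ℕ → ℝ, Tendsto a atTop (nhds 1) → Tendsto b atTop (nhds 1) →
    Tendsto (fun n => op (a n) (b n)) atTop (nhds 1)

/-!
Fix a basis of `X`. A sequence whose coordinates tend to `0` is fuzzy null: expand it along the
basis and use that `c k • v` is fuzzy null when `c k → 0`, because `φ c → 0` as `c → 0⁺`. Hence
no fuzzy null sequence has all its coordinate vectors on the unit sphere: a limit point `a` of them
would make `b.equivFun.symm a ≠ 0` a second fuzzy limit besides `0`. If a fuzzy bounded set had
unbounded coordinates, rescaling points `x k` with `‖coords (x k)‖ → ∞` to coordinates of norm one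
would produce such a sequence; so its coordinates are bounded, and Bolzano–Weierstrass in
coordinates makes a closed fuzzy bounded set compact. Conversely, a compact set is closed by
uniqueness of fuzzy limits, and fuzzy bounded since (bN4) and continuity of `*` at `(1, 1)` give
`N (x k) (s k) → 1` along any fuzzy convergent sequence when `s k → ∞`.
-/

namespace FuzzyStrongPhiBNorm

variable {X : Type*} [AddCommGroup X] [Module ℝ X] (F : FuzzyStrongPhiBNorm X)

lemma phi_pos {c : ℝ} (hc : 0 < c) : 0 < F.phi c := by
  have h0 : 0 ≤ F.phi (c / 2) := by
    refine le_of_tendsto F.phi_lim_zero ?_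
    filter_upwards [self_mem_nhdsWithin, nhdsWithin_le_nhds (eventually_lt_nhds (half_pos hc))]
      with s hs hsc
    exact F.phi_strictMono.monotoneOn hs (half_pos hc) hsc.le
  exact h0.trans_lt (F.phi_strictMono (half_pos hc) hc (half_lt_self hc))

lemma phi_abs (c : ℝ) : F.phi |c| = F.phi c := by
  rcases abs_choice c with h | h <;> rw [h]
  exact F.phi_even c

lemma N_zero {t : ℝ} (ht : 0 < t) : F.N 0 t = 1 := (F.bN2 0).2 rfl t ht

lemma N_neg (x : X) {t : ℝ} (ht : 0 < t) : F.N (-x) t = F.N x t := by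
  have hphi : F.phi (-1) = 1 := (F.phi_even 1).trans F.phi_one
  simpa [hphi] using F.bN3 (-1) x t ht (by simp [hphi])

lemma N_le_N_smul (x : X) {c s t : ℝ} (ht : 0 < t) (hc : c ≠ 0) (h : F.phi |c| * s ≤ t) :
    F.N x s ≤ F.N (c • x) t := by
  have hφ : 0 < F.phi c := F.phi_abs c ▸ F.phi_pos (abs_pos.2 hc)
  rw [F.bN3 c x t ht hφ.ne']
  exact F.bN5_mono x ((le_div_iff₀ hφ).2 (by rwa [mul_comm, ← F.phi_abs]))

lemma exists_N_le_N_smul_of_abs_lt {s t : ℝ} (hs : 0 < s) (ht : 0 < t) :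
    ∃ δ > 0, ∀ (x : X) (c : ℝ), |c| < δ → F.N x s ≤ F.N (c • x) t := by
  obtain ⟨δ, hδ, hφ⟩ := Metric.tendsto_nhdsWithin_nhds.1 F.phi_lim_zero (t / s) (by positivity)
  refine ⟨δ, hδ, fun x c hc => ?_⟩
  rcases eq_or_ne c 0 with rfl | hc0
  · rw [zero_smul, F.N_zero ht]
    exact F.N_le_one x s
  refine F.N_le_N_smul x ht hc0 ((le_div_iff₀ hs).1 ?_)
  have hc' : 0 < |c| := abs_pos.2 hc0
  have := hφ hc' (by rwa [Real.dist_eq, sub_zero, abs_abs])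
  rw [Real.dist_eq, sub_zero] at this
  exact (le_abs_self _).trans this.le

lemma tendsto_one_of_le_one {f : ℕ → ℝ} (hle : ∀ k, f k ≤ 1)
    (h : ∀ ε > 0, ∀ᶠ k in atTop, 1 - ε < f k) : Tendsto f atTop (𝓝 1) := by
  refine tendsto_order.2 ⟨fun a ha => ?_, fun a ha => .of_forall fun k => (hle k).trans_lt ha⟩
  filter_upwards [h (1 - a) (by linarith)] with k hk
  linarith

def FuzzyNull (z : ℕ → X) : Prop :=
  ∀ t > 0, Tendsto (fun k => F.N (z k) t) atTop (𝓝 1)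

def FuzzyBounded (A : Set X) : Prop :=
  ∀ r : ℝ, 0 < r → r < 1 → ∃ t > 0, ∀ x ∈ A, F.N x t > 1 - r

def FuzzyClosed (A : Set X) : Prop :=
  ∀ (x : ℕ → X) (y : X), (∀ m, x m ∈ A) → F.FuzzyNull (fun m => x m - y) → y ∈ A

def FuzzyCompact (A : Set X) : Prop :=
  ∀ x : ℕ → X, (∀ m, x m ∈ A) →
    ∃ (y : X) (_ : y ∈ A) (φ : ℕ → ℕ), StrictMono φ ∧ F.FuzzyNull fun k => x (φ k) - y

variable {F}

lemma FuzzyNull.comp {z : ℕ → X} (hz : F.FuzzyNull z) {ψ : ℕ → ℕ}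
    (hψ : Tendsto ψ atTop atTop) : F.FuzzyNull fun k => z (ψ k) :=
  fun t ht => (hz t ht).comp hψ

lemma FuzzyNull.add (hop : ContAtOneOne F.op) {u v : ℕ → X} (hu : F.FuzzyNull u)
    (hv : F.FuzzyNull v) : F.FuzzyNull fun k => u k + v k := by
  intro t ht
  have hK : 0 < F.K := one_pos.trans_le F.K_ge_one
  have hsplit : t / 2 + F.K * (t / (2 * F.K)) = t := by field_simp; ring
  refine tendsto_of_tendsto_of_tendsto_of_le_of_le
    (hop _ _ (hu (t / 2) (by positivity)) (hv (t / (2 * F.K)) (by positivity)))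
    tendsto_const_nhds (fun k => ?_) (fun k => F.N_le_one _ _)
  simpa only [hsplit] using F.bN4 (u k) (v k) (t / 2) (t / (2 * F.K))

lemma FuzzyNull.neg {u : ℕ → X} (hu : F.FuzzyNull u) : F.FuzzyNull fun k => -u k := by
  intro t ht
  simpa only [F.N_neg _ ht] using hu t ht

lemma FuzzyNull.sub (hop : ContAtOneOne F.op) {u v : ℕ → X} (hu : F.FuzzyNull u)
    (hv : F.FuzzyNull v) : F.FuzzyNull fun k => u k - v k := by
  simpa only [sub_eq_add_neg] using hu.add hop hv.neg

lemma eq_zero_of_fuzzyNull_const {w : X} (h : F.FuzzyNull fun _ => w) : w = 0 :=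
  (F.bN2 w).1 fun t ht => tendsto_nhds_unique tendsto_const_nhds (h t ht)

lemma eq_of_fuzzyNull_sub (hop : ContAtOneOne F.op) {z : ℕ → X} {y y' : X}
    (h : F.FuzzyNull fun k => z k - y) (h' : F.FuzzyNull fun k => z k - y') : y = y' := by
  have hconst := h.sub hop h'
  simp only [sub_sub_sub_cancel_left] at hconst
  exact (sub_eq_zero.1 (eq_zero_of_fuzzyNull_const hconst)).symm

lemma fuzzyNull_sum (hop : ContAtOneOne F.op) {ι : Type*} (s : Finset ι) {u : ι → ℕ → X}
    (h : ∀ i ∈ s, F.FuzzyNull (u i)) : F.FuzzyNull fun k => ∑ i ∈ s, u i k := by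
  classical
  induction s using Finset.induction_on with
  | empty =>
    intro t ht
    simpa only [Finset.sum_empty, F.N_zero ht] using tendsto_const_nhds
  | insert i s hi ih =>
    simp only [Finset.sum_insert hi]
    exact (h i (s.mem_insert_self i)).add hop (ih fun j hj => h j (s.mem_insert_of_mem hj))

lemma fuzzyBounded_singleton (v : X) : F.FuzzyBounded {v} := by
  intro r hr _
  obtain ⟨t, ht⟩ := eventually_atTop.1
    ((F.bN5_lim v).eventually (eventually_gt_nhds (sub_lt_self 1 hr)))
  refine ⟨max t 1, by positivity, fun x hx => ?_⟩
  rw [Set.mem_singleton_iff.1 hx]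
  exact ht _ (le_max_left _ _)

lemma FuzzyBounded.fuzzyNull_smul {A : Set X} (hA : F.FuzzyBounded A) {x : ℕ → X}
    (hx : ∀ k, x k ∈ A) {c : ℕ → ℝ} (hc : Tendsto c atTop (𝓝 0)) :
    F.FuzzyNull fun k => c k • x k := by
  intro t ht
  refine tendsto_one_of_le_one (fun k => F.N_le_one _ _) fun ε hε => ?_
  obtain ⟨s, hs, hsA⟩ := hA (min ε 2⁻¹) (by positivity) (by norm_num)
  obtain ⟨δ, hδ, hsmul⟩ := F.exists_N_le_N_smul_of_abs_lt hs ht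
  filter_upwards [(tendsto_zero_iff_abs_tendsto_zero c).1 hc |>.eventually (eventually_lt_nhds hδ)]
    with k hk
  calc 1 - ε ≤ 1 - min ε 2⁻¹ := by linarith [min_le_left ε 2⁻¹]
    _ < F.N (x k) s := hsA _ (hx k)
    _ ≤ F.N (c k • x k) t := hsmul _ _ hk

lemma tendsto_N_of_fuzzyNull_sub (hop : ContAtOneOne F.op) {x : ℕ → X} {y : X}
    (h : F.FuzzyNull fun k => x k - y) {s : ℕ → ℝ} (hs : Tendsto s atTop atTop) :
    Tendsto (fun k => F.N (x k) (s k)) atTop (𝓝 1) := by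
  have hy : Tendsto (fun k => F.N y (s k - F.K)) atTop (𝓝 1) :=
    (F.bN5_lim y).comp (tendsto_atTop_add_const_right _ _ hs)
  refine tendsto_of_tendsto_of_tendsto_of_le_of_le (hop _ _ hy (h 1 one_pos))
    tendsto_const_nhds (fun k => ?_) (fun k => F.N_le_one _ _)
  simpa using F.bN4 y (x k - y) (s k - F.K) 1

section Basis

variable {ι : Type*} [Fintype ι] (b : Module.Basis ι ℝ X)

lemma fuzzyNull_of_tendsto_equivFun (hop : ContAtOneOne F.op) {z : ℕ → X}
    (h : Tendsto (fun k => b.equivFun (z k)) atTop (𝓝 0)) : F.FuzzyNull z := by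
  have hsum := fuzzyNull_sum hop Finset.univ fun i _ =>
    (fuzzyBounded_singleton (b i)).fuzzyNull_smul (fun _ => rfl)
      ((continuous_apply i).tendsto 0 |>.comp h)
  simpa only [Function.comp_apply, b.sum_equivFun] using hsum

lemma fuzzyNull_sub_of_tendsto_equivFun (hop : ContAtOneOne F.op) {x : ℕ → X} {a : ι → ℝ}
    (h : Tendsto (fun k => b.equivFun (x k)) atTop (𝓝 a)) :
    F.FuzzyNull fun k => x k - b.equivFun.symm a :=
  fuzzyNull_of_tendsto_equivFun b hop (by
    simpa only [map_sub, LinearEquiv.apply_symm_apply, sub_self] using h.sub_const a)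

lemma not_fuzzyNull_of_norm_equivFun_eq_one (hop : ContAtOneOne F.op) {z : ℕ → X}
    (hz : F.FuzzyNull z) (h1 : ∀ k, ‖b.equivFun (z k)‖ = 1) : False := by
  obtain ⟨a, ha, ψ, hψ, hlim⟩ := (isCompact_sphere (0 : ι → ℝ) 1).tendsto_subseq
    (x := fun k => b.equivFun (z k)) (by simpa using h1)
  have hsub := fuzzyNull_sub_of_tendsto_equivFun b hop hlim
  have ha0 : b.equivFun.symm a = 0 :=
    (eq_of_fuzzyNull_sub hop (y := 0) (by simpa only [sub_zero] using hz.comp hψ.tendsto_atTop)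
      hsub).symm
  rw [LinearEquiv.map_eq_zero_iff] at ha0
  simp [ha0] at ha

lemma FuzzyBounded.exists_norm_equivFun_le (hop : ContAtOneOne F.op) {A : Set X}
    (hA : F.FuzzyBounded A) : ∃ C, ∀ x ∈ A, ‖b.equivFun x‖ ≤ C := by
  by_contra! hunb
  choose x hxA hx using fun k : ℕ => hunb k
  have hinf : Tendsto (fun k => ‖b.equivFun (x k)‖) atTop atTop :=
    tendsto_atTop_mono (fun k => (hx k).le) tendsto_natCast_atTop_atTop
  have hne0 : ∀ k, b.equivFun (x k) ≠ 0 := fun k h => by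
    linarith [hx k, norm_eq_zero.2 h, (Nat.cast_nonneg k : (0 : ℝ) ≤ k)]
  exact not_fuzzyNull_of_norm_equivFun_eq_one b hop
    (hA.fuzzyNull_smul hxA hinf.inv_tendsto_atTop)
    fun k => by simpa using norm_smul_inv_norm (𝕜 := ℝ) (hne0 k)

end Basis

lemma FuzzyCompact.fuzzyClosed (hop : ContAtOneOne F.op) {A : Set X} (hA : F.FuzzyCompact A) :
    F.FuzzyClosed A := by
  intro x y hxA hxy
  obtain ⟨y', hy', φ, hφ, hxy'⟩ := hA x hxA
  rwa [eq_of_fuzzyNull_sub hop (hxy.comp hφ.tendsto_atTop) hxy']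

lemma FuzzyCompact.fuzzyBounded (hop : ContAtOneOne F.op) {A : Set X} (hA : F.FuzzyCompact A) :
    F.FuzzyBounded A := by
  intro r hr _
  by_contra! hfar
  choose x hxA hx using fun k : ℕ => hfar (k + 1) (by positivity)
  obtain ⟨y, -, φ, hφ, hxy⟩ := hA x hxA
  have hlim := tendsto_N_of_fuzzyNull_sub hop hxy (s := fun k => (φ k : ℝ) + 1)
    (tendsto_atTop_add_const_right _ _ (tendsto_natCast_atTop_atTop.comp hφ.tendsto_atTop))
  have : (1 : ℝ) ≤ 1 - r := le_of_tendsto' hlim fun k => hx (φ k)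
  linarith

lemma FuzzyClosed.fuzzyCompact_of_fuzzyBounded [FiniteDimensional ℝ X]
    (hop : ContAtOneOne F.op) {A : Set X} (hcl : F.FuzzyClosed A) (hbd : F.FuzzyBounded A) :
    F.FuzzyCompact A := by
  intro x hxA
  let b := Module.finBasis ℝ X
  obtain ⟨C, hC⟩ := hbd.exists_norm_equivFun_le b hop
  obtain ⟨a, -, ψ, hψ, hlim⟩ :=
    tendsto_subseq_of_bounded (Metric.isBounded_closedBall (x := 0) (r := C))
      (x := fun k => b.equivFun (x k)) fun k => by simpa using hC _ (hxA k)
  have hxy := fuzzyNull_sub_of_tendsto_equivFun b hop hlim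
  exact ⟨_, hcl _ _ (fun k => hxA _) hxy, ψ, hψ, hxy⟩

end FuzzyStrongPhiBNorm

theorem stmt14 {X : Type*} [AddCommGroup X] [Module ℝ X] [FiniteDimensional ℝ X]
    (F : FuzzyStrongPhiBNorm X) (hop : ContAtOneOne F.op) (A : Set X) :
    (∀ x : ℕ → X, (∀ m, x m ∈ A) →
      ∃ (y : X) (_ : y ∈ A) (φ : ℕ → ℕ), StrictMono φ ∧
        ∀ t > 0, Tendsto (fun k => F.N (x (φ k) - y) t) atTop (nhds 1)) ↔
    ((∀ (x : ℕ → X) (y : X), (∀ m, x m ∈ A) →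
        (∀ t > 0, Tendsto (fun m => F.N (x m - y) t) atTop (nhds 1)) → y ∈ A) ∧
     (∀ r : ℝ, 0 < r → r < 1 → ∃ t > 0, ∀ x ∈ A, F.N x t > 1 - r)) :=
  show F.FuzzyCompact A ↔ F.FuzzyClosed A ∧ F.FuzzyBounded A from
    ⟨fun h => ⟨h.fuzzyClosed hop, h.fuzzyBounded hop⟩,
      fun h => h.1.fuzzyCompact_of_fuzzyBounded hop h.2⟩
end
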